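/- Given the quadratic forms q₁(x) = x₁² + 2x₁x₂ and q₂(x) = x₂² + 2x₁x₂ on ℝ², the map x ↦ (q₁(x), q₂(x)) is surjective onto ℝ². -/
import Mathlib


theorem surjective_pair_of_forms :
    Function.Surjective (fun x : ℝ × ℝ =>
      (x.1 ^ 2 + 2 * x.1 * x.2, x.2 ^ 2 + 2 * x.1 * x.2)) := by
  rintro ⟨a, b⟩
  set r := Real.sqrt (a^2 - a*b + b^2) with hrdef
  have hr0 : 0 ≤ r := Real.sqrt_nonneg _
  have hrsq : r^2 = a^2 - a*b + b^2 :=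
    Real.sq_sqrt (by nlinarith [sq_nonneg (a-b), sq_nonneg a, sq_nonneg b])
  set p : ℝ := ((a+b) - r)/3 with hpdef
  have hu : 0 ≤ a - 2*p := by
    have h : (2*b - a)/2 ≤ r := by
      rcases le_or_gt (2*b - a) 0 with h|h
      · linarith
      · have h2 := Real.sqrt_le_sqrt (show ((2*b-a)/2)^2 ≤ a^2 - a*b + b^2 by nlinarith)
        rwa [Real.sqrt_sq (by linarith)] at h2
    rw [hpdef]; linarith
  have hv : 0 ≤ b - 2*p := by
    have h : (2*a - b)/2 ≤ r := by
      rcases le_or_gt (2*a - b) 0 with h|h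
      · linarith
      · have h2 := Real.sqrt_le_sqrt (show ((2*a-b)/2)^2 ≤ a^2 - a*b + b^2 by nlinarith)
        rwa [Real.sqrt_sq (by linarith)] at h2
    rw [hpdef]; linarith
  have hpv : p^2 = (a - 2*p) * (b - 2*p) := by
    rw [hpdef]; field_simp; nlinarith [hrsq]
  set x : ℝ := Real.sqrt (a - 2*p) with hxdef
  set y : ℝ := if 0 ≤ p then Real.sqrt (b - 2*p) else -Real.sqrt (b - 2*p) with hydef
  have hx2 : x^2 = a - 2*p := Real.sq_sqrt hu
  have hy2 : y^2 = b - 2*p := by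
    rw [hydef]; split <;> simpa using Real.sq_sqrt hv
  have hxy : x * y = p := by
    have hbase : Real.sqrt (a - 2*p) * Real.sqrt (b - 2*p) = |p| := by
      rw [← Real.sqrt_mul hu, ← hpv, Real.sqrt_sq_eq_abs]
    rw [hxdef, hydef]
    split_ifs with h
    · rw [hbase, abs_of_nonneg h]
    · rw [mul_neg, hbase, abs_of_neg (lt_of_not_ge h)]; ring
  exact ⟨(x, y), by simp only [Prod.mk.injEq]; constructor <;> nlinarith [hx2, hy2, hxy]⟩
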